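/- Let (Ω, F, P) be a probability space, X₁ a random variable taking values in a finite set S ⊆ ℝ^d, and X₂ : Ω → ℝ^d square-integrable. Let X̂₁, X̂₂ be random vectors on Ω such that the joint law of (X̂₁, X̂₂) equals the joint law of (X₁, X₂) (zero joint-distribution perception loss) and such that X̂₁ is independent of X₂. Then E‖X₂ − X̂₂‖² ≥ Σ_{s ∈ S, P(X₁ = s) > 0} P(X₁ = s) · W₂²(law of X₂, law of X₂ under P(· | X₁ = s)). In particular, even when X₂ itself is available at the decoder (so the MMSE distortion of the second frame is zero), the distortion under zero joint-distribution perception loss is bounded below by this positive quantity, so the factor-of-two bound fails for the joint-distribution perception loss. -/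

import Mathlib

/-!
Condition on the atom `{X̂₁ = s}`. Independence leaves the law of `X₂` unchanged, while equality of
the joint laws turns the law of `X̂₂` into the law of `X₂` given `X₁ = s`. Hence `(X₂, X̂₂)` under
`P(· | X̂₁ = s)` couples the two laws in the Wasserstein term, and the cost of this coupling, weighted
by `P(X̂₁ = s) = P(X₁ = s)`, is the distortion accumulated on the atom; summing over the disjoint
atoms gives at most the total distortion.
-/

open MeasureTheory ProbabilityTheory
open scoped Classical

/-- Squared Wasserstein-2 distance between two measures, as the infimum of the
expected squared distance over all couplings. -/
noncomputable def W2sq {E : Type*} [NormedAddCommGroup E] [MeasurableSpace E]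
    (μ ν : Measure E) : ℝ :=
  sInf { c : ℝ | ∃ π : Measure (E × E), IsProbabilityMeasure π ∧
    π.map Prod.fst = μ ∧ π.map Prod.snd = ν ∧ c = ∫ p, ‖p.1 - p.2‖ ^ 2 ∂π }

section

variable {Ω Ω' α β : Type*} [MeasurableSpace Ω] [MeasurableSpace Ω'] [MeasurableSpace α]
  [MeasurableSpace β]

lemma W2sq_le_integral_norm_sub_sq {E : Type*} [NormedAddCommGroup E] [MeasurableSpace E]
    [OpensMeasurableSpace E] [SecondCountableTopology E]
    {Q : Measure Ω} [IsProbabilityMeasure Q] {Y Z : Ω → E}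
    (hY : AEMeasurable Y Q) (hZ : AEMeasurable Z Q) :
    W2sq (Q.map Y) (Q.map Z) ≤ ∫ ω, ‖Y ω - Z ω‖ ^ 2 ∂Q := by
  have hYZ : AEMeasurable (fun ω => (Y ω, Z ω)) Q := hY.prodMk hZ
  refine csInf_le ⟨0, ?_⟩ ⟨Q.map fun ω => (Y ω, Z ω), Measure.isProbabilityMeasure_map hYZ,
    Measure.fst_map_prodMk₀ hZ, Measure.snd_map_prodMk₀ hY, ?_⟩
  · rintro c ⟨π, -, -, -, rfl⟩
    exact integral_nonneg fun p => sq_nonneg _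
  · exact (integral_map hYZ (f := fun p : E × E => ‖p.1 - p.2‖ ^ 2) (by fun_prop)).symm

lemma ProbabilityTheory.IndepFun.map_cond_preimage {P : Measure Ω} [IsFiniteMeasure P]
    {Y : Ω → α} {X : Ω → β}
    (h : IndepFun Y X P) (hY : Measurable Y) (hX : AEMeasurable X P) {B : Set α}
    (hB : MeasurableSet B) (hPB : P (Y ⁻¹' B) ≠ 0) :
    (P[|Y ⁻¹' B]).map X = P.map X := by
  ext A hA
  rw [Measure.map_apply_of_aemeasurable (hX.mono_ac cond_absolutelyContinuous) hA,
    Measure.map_apply_of_aemeasurable hX hA, cond_apply (hY hB),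
    h.measure_inter_preimage_eq_mul _ _ hB hA, ← mul_assoc,
    ENNReal.inv_mul_cancel hPB (measure_ne_top _ _), one_mul]

lemma ProbabilityTheory.IdentDistrib.map_cond_fst_preimage {μ : Measure Ω} {ν : Measure Ω'}
    {Y : Ω → α} {Z : Ω → β} {Y' : Ω' → α} {Z' : Ω' → β}
    (h : IdentDistrib (fun ω => (Y ω, Z ω)) (fun ω => (Y' ω, Z' ω)) μ ν)
    (hY : Measurable Y) (hY' : Measurable Y') {B : Set α} (hB : MeasurableSet B) :
    (μ[|Y ⁻¹' B]).map Z = (ν[|Y' ⁻¹' B]).map Z' := by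
  have hZ : AEMeasurable Z μ := measurable_snd.comp_aemeasurable h.aemeasurable_fst
  have hZ' : AEMeasurable Z' ν := measurable_snd.comp_aemeasurable h.aemeasurable_snd
  have hYB : μ (Y ⁻¹' B) = ν (Y' ⁻¹' B) := (h.comp measurable_fst).measure_mem_eq hB
  ext A hA
  rw [Measure.map_apply_of_aemeasurable (hZ.mono_ac cond_absolutelyContinuous) hA,
    Measure.map_apply_of_aemeasurable (hZ'.mono_ac cond_absolutelyContinuous) hA,
    cond_apply (hY hB), cond_apply (hY' hB), ← Set.mk_preimage_prod, ← Set.mk_preimage_prod,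
    h.measure_mem_eq (hB.prod hA), hYB]

lemma toReal_mul_integral_cond {E : Type*} [NormedAddCommGroup E] [NormedSpace ℝ E]
    {μ : Measure Ω} {s : Set Ω} (hs : μ s ≠ ⊤) (f : Ω → E) :
    (μ s).toReal • ∫ ω, f ω ∂μ[|s] = ∫ ω in s, f ω ∂μ := by
  by_cases hs0 : μ s = 0
  · simp [hs0, Measure.restrict_eq_zero.2 hs0]
  · rw [ProbabilityTheory.cond, integral_smul_measure, smul_smul, ENNReal.toReal_inv,
      mul_inv_cancel₀ (ENNReal.toReal_ne_zero.2 ⟨hs0, hs⟩), one_smul]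

lemma toReal_mul_W2sq_map_cond_le_setIntegral {E : Type*} [NormedAddCommGroup E]
    [MeasurableSpace E] [OpensMeasurableSpace E] [SecondCountableTopology E]
    {Q : Measure Ω} [IsFiniteMeasure Q] {B : Set Ω} (hB : Q B ≠ 0) {Y Z : Ω → E}
    (hY : AEMeasurable Y Q) (hZ : AEMeasurable Z Q) :
    (Q B).toReal * W2sq ((Q[|B]).map Y) ((Q[|B]).map Z) ≤ ∫ ω in B, ‖Y ω - Z ω‖ ^ 2 ∂Q := by
  have := cond_isProbabilityMeasure hB
  rw [← toReal_mul_integral_cond (measure_ne_top Q B), smul_eq_mul]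
  exact mul_le_mul_of_nonneg_left (W2sq_le_integral_norm_sub_sq
    (hY.mono_ac cond_absolutelyContinuous) (hZ.mono_ac cond_absolutelyContinuous))
    ENNReal.toReal_nonneg

lemma sum_setIntegral_fiber_le [MeasurableSingletonClass α] {μ : Measure Ω} {f : Ω → ℝ}
    (hf : Integrable f μ) (hf0 : 0 ≤ᵐ[μ] f) {Y : Ω → α} (hY : Measurable Y) (T : Finset α) :
    ∑ a ∈ T, ∫ ω in Y ⁻¹' {a}, f ω ∂μ ≤ ∫ ω, f ω ∂μ := by
  rw [← integral_biUnion_finset _ (fun a _ => hY (measurableSet_singleton a))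
    ((Set.pairwiseDisjoint_fiber Y _).subset (Set.subset_univ _)) fun _ _ => hf.integrableOn]
  exact setIntegral_le_integral hf hf0

end

theorem statement4 {Ω : Type*} {F : MeasurableSpace Ω} (P : Measure Ω) [IsProbabilityMeasure P]
    {d : ℕ}
    (X₁ : Ω → EuclideanSpace ℝ (Fin d)) (S : Finset (EuclideanSpace ℝ (Fin d)))
    (hX₁ : Measurable X₁)
    (X₂ : Ω → EuclideanSpace ℝ (Fin d)) (hX₂ : MemLp X₂ 2 P)
    (Xhat₁ Xhat₂ : Ω → EuclideanSpace ℝ (Fin d))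
    (hXhat₁ : Measurable Xhat₁) (hXhat₂ : Measurable Xhat₂)
    (hjoint : P.map (fun ω => (Xhat₁ ω, Xhat₂ ω)) = P.map (fun ω => (X₁ ω, X₂ ω)))
    (hindep : IndepFun Xhat₁ X₂ P) :
    ∫ ω, ‖X₂ ω - Xhat₂ ω‖ ^ 2 ∂P ≥
      ∑ s ∈ S.filter (fun s => 0 < P (X₁ ⁻¹' {s})),
        (P (X₁ ⁻¹' {s})).toReal *
          W2sq (P.map X₂) ((ProbabilityTheory.cond P (X₁ ⁻¹' {s})).map X₂) := by
  have hid : IdentDistrib (fun ω => (Xhat₁ ω, Xhat₂ ω)) (fun ω => (X₁ ω, X₂ ω)) P P :=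
    ⟨(hXhat₁.prodMk hXhat₂).aemeasurable, hX₁.aemeasurable.prodMk hX₂.aemeasurable, hjoint⟩
  have hXhat₂L2 : MemLp Xhat₂ 2 P := (hid.comp measurable_snd).memLp_iff.2 hX₂
  have hatom (s) : P (Xhat₁ ⁻¹' {s}) = P (X₁ ⁻¹' {s}) :=
    (hid.comp measurable_fst).measure_mem_eq (measurableSet_singleton s)
  calc ∑ s ∈ S.filter (fun s => 0 < P (X₁ ⁻¹' {s})),
        (P (X₁ ⁻¹' {s})).toReal * W2sq (P.map X₂) ((P[|X₁ ⁻¹' {s}]).map X₂)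
      ≤ ∑ s ∈ S.filter (fun s => 0 < P (X₁ ⁻¹' {s})),
          ∫ ω in Xhat₁ ⁻¹' {s}, ‖X₂ ω - Xhat₂ ω‖ ^ 2 ∂P := by
        refine Finset.sum_le_sum fun s hs => ?_
        have hs0 : P (Xhat₁ ⁻¹' {s}) ≠ 0 := by
          rw [hatom]; exact (Finset.mem_filter.1 hs).2.ne'
        rw [← hatom, ← hindep.map_cond_preimage hXhat₁ hX₂.aemeasurable
          (measurableSet_singleton s) hs0, ← hid.map_cond_fst_preimage hXhat₁ hX₁
          (measurableSet_singleton s)]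
        exact toReal_mul_W2sq_map_cond_le_setIntegral hs0 hX₂.aemeasurable
          hXhat₂.aemeasurable
    _ ≤ ∫ ω, ‖X₂ ω - Xhat₂ ω‖ ^ 2 ∂P :=
        sum_setIntegral_fiber_le ((hX₂.sub hXhat₂L2).integrable_norm_pow two_ne_zero)
          (Filter.Eventually.of_forall fun _ => sq_nonneg _) hXhat₁ _
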